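/- arXiv:1710.10238 — 7 statements merged into one kernel-verified Lean document; each statement's English description precedes it below -/
import Mathlib

section
/- If E is a clan, then the category E^(1), whose objects are the fibrations of E and whose morphisms a → b are commutative squares (f₀, f₁) with f₁∘a = b∘f₀, is a clan in which the fibrations are the Reedy fibrations, i.e. the morphisms whose underlying commutative square is Reedy fibrant; moreover the inclusion functor E^(1) → E^[1] into the clan of all arrows of E equipped with pointwise fibrations is a morphism of clans. -/
open CategoryTheory CategoryTheory.Limits

universe w v u v' u' v'' u''

/-- A *clan* structure on a category `E`: a terminal object together with a class of
maps (the *fibrations*) containing the isomorphisms, closed under composition and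
base changes (every fibration is carrable and any pullback of a fibration is a
fibration), and containing every map to the terminal object. -/
structure Clan (E : Type u) [Category.{v} E] where
  fib : MorphismProperty E
  one : E
  one_isTerminal : IsTerminal one
  fib_of_isIso : ∀ ⦃A B : E⦄ (f : A ⟶ B), IsIso f → fib f
  fib_comp : ∀ ⦃A B C : E⦄ {f : A ⟶ B} {g : B ⟶ C}, fib f → fib g → fib (f ≫ g)
  carrable : ∀ ⦃A B X : E⦄ (f : A ⟶ B) ⦃p : X ⟶ B⦄, fib p →
    ∃ (P : E) (p₁ : P ⟶ A) (p₂ : P ⟶ X), IsPullback p₁ p₂ f p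
  fib_baseChange : ∀ ⦃P A X B : E⦄ {p₁ : P ⟶ A} {p₂ : P ⟶ X} {f : A ⟶ B} {p : X ⟶ B},
    IsPullback p₁ p₂ f p → fib p → fib p₁
  fib_toOne : ∀ X : E, fib (one_isTerminal.from X)

/-- A *morphism of clans* is a functor taking fibrations to fibrations, preserving
base changes of fibrations, and taking the terminal object to a terminal object. -/
structure IsClanMorphism {E : Type u} {E' : Type u'} [Category.{v} E] [Category.{v'} E']
    (C : Clan E) (D : Clan E') (F : E ⥤ E') : Prop where
  map_fib : ∀ ⦃A B : E⦄ (f : A ⟶ B), C.fib f → D.fib (F.map f)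
  map_isPullback : ∀ ⦃P A X B : E⦄ {p₁ : P ⟶ A} {p₂ : P ⟶ X} {f : A ⟶ B} {p : X ⟶ B},
    IsPullback p₁ p₂ f p → C.fib p →
      IsPullback (F.map p₁) (F.map p₂) (F.map f) (F.map p)
  preserves_terminal : Nonempty (IsTerminal (F.obj C.one))

/-- The local category `E(A)`: the full subcategory of `Over A` spanned by the
fibrations `X ↠ A`. -/
abbrev ClanSlice {E : Type u} [Category.{v} E] (C : Clan E) (A : E) :=
  ObjectProperty.FullSubcategory (fun X : Over A => C.fib X.hom)

/-- The underlying morphism of `Over A` of a morphism of `ClanSlice C A`. -/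
def ClanSlice.homOf {E : Type u} [Category.{v} E] {C : Clan E} {A : E}
    {X Y : ClanSlice C A} (u : X ⟶ Y) : X.obj ⟶ Y.obj := u.hom

/-- A commutative square with horizontal maps `f₀ : A₀ ⟶ B₀`, `f₁ : A₁ ⟶ B₁` and
vertical maps `a : A₀ ⟶ A₁`, `b : B₀ ⟶ B₁` is *Reedy fibrant* if `f₁` and `b` are
fibrations and the gap map `(a, f₀) : A₀ ⟶ A₁ ×_{B₁} B₀` into the pullback of `b`
along `f₁` is a fibration. -/
def ReedyFibrantSq {E : Type u} [Category.{v} E] (C : Clan E)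
    {A₀ A₁ B₀ B₁ : E} (f₀ : A₀ ⟶ B₀) (f₁ : A₁ ⟶ B₁) (a : A₀ ⟶ A₁) (b : B₀ ⟶ B₁) : Prop :=
  C.fib f₁ ∧ C.fib b ∧
    ∀ ⦃P : E⦄ (p₁ : P ⟶ A₁) (p₂ : P ⟶ B₀), IsPullback p₁ p₂ f₁ b →
      ∀ g : A₀ ⟶ P, g ≫ p₁ = a → g ≫ p₂ = f₀ → C.fib g

/-- The category `E^(1)`: the full subcategory of the arrow category of `E` spanned
by the fibrations of the clan `C`. -/
abbrev FibArrow {E : Type u} [Category.{v} E] (C : Clan E) :=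
  ObjectProperty.FullSubcategory (fun f : Arrow E => C.fib f.hom)

/-- The underlying morphism of arrows of a morphism of `FibArrow C`. -/
def FibArrow.homOf {E : Type u} [Category.{v} E] {C : Clan E}
    {X Y : FibArrow C} (u : X ⟶ Y) : X.obj ⟶ Y.obj := u.hom

/-!
Both clans are built from chosen pullbacks: base change along a fibration only has to be checked
on one pullback square per cospan, since any other one differs from it by an isomorphism.

In `E^[1]` pullbacks along pointwise fibrations are computed pointwise. For a Reedy fibration
`u : x ⟶ z` and any `v : y ⟶ z` in `E^(1)`, write `P` for the pointwise pullback. The gap map of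
the projection `P ⟶ y` is a base change of the gap map of `u`, so `P` is a fibration, the projection
is Reedy, and the inclusion preserves this pullback by construction. A Reedy fibration is a
pointwise one because `u₀` is the gap map of `u` followed by a base change of `u₁`.
-/

namespace CategoryTheory

variable {D : Type u'} [Category.{v'} D]

lemma Arrow.isPullback_of_left_of_right {P X Y Z : Arrow D} {fst : P ⟶ X} {snd : P ⟶ Y}
    {f : X ⟶ Z} {g : Y ⟶ Z} (w : fst ≫ f = snd ≫ g)
    (hl : IsPullback fst.left snd.left f.left g.left)
    (hr : IsPullback fst.right snd.right f.right g.right) : IsPullback fst snd f g :=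
  IsPullback.of_isLimit' ⟨w⟩ (Comma.fstSndJointlyReflectLimit
    ((isLimitMapConePullbackConeEquiv _ _).symm hl.isLimit)
    ((isLimitMapConePullbackConeEquiv _ _).symm hr.isLimit))

def Limits.IsTerminal.arrowMkId {T : D} (hT : IsTerminal T) : IsTerminal (Arrow.mk (𝟙 T)) :=
  IsTerminal.ofUniqueHom
    (fun f => Arrow.homMk (hT.from f.left) (hT.from f.right) (hT.hom_ext _ _))
    (fun _ _ => Arrow.hom_ext _ _ (hT.hom_ext _ _) (hT.hom_ext _ _))

lemma Functor.map_isPullback_of_map_isPullback {D' : Type u''} [Category.{v''} D'] (F : D ⥤ D')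
    {P P' X Y Z : D} {fst : P ⟶ X} {snd : P ⟶ Y} {fst' : P' ⟶ X} {snd' : P' ⟶ Y}
    {f : X ⟶ Z} {g : Y ⟶ Z} (h : IsPullback fst snd f g) (h' : IsPullback fst' snd' f g)
    (hF : IsPullback (F.map fst') (F.map snd') (F.map f) (F.map g)) :
    IsPullback (F.map fst) (F.map snd) (F.map f) (F.map g) :=
  have := preservesLimit_of_preserves_limit_cone h'.isLimit
    ((isLimitMapConePullbackConeEquiv F h'.w).symm hF.isLimit)
  h.map F

end CategoryTheory

namespace Clan

variable {E : Type u} [Category.{v} E]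

def mk' (fib : MorphismProperty E) (one : E) (one_isTerminal : IsTerminal one)
    (fib_of_isIso : ∀ ⦃A B : E⦄ (f : A ⟶ B), IsIso f → fib f)
    (fib_comp : ∀ ⦃A B C : E⦄ {f : A ⟶ B} {g : B ⟶ C}, fib f → fib g → fib (f ≫ g))
    (exists_pullback : ∀ ⦃A B X : E⦄ (f : A ⟶ B) ⦃p : X ⟶ B⦄, fib p →
      ∃ (P : E) (p₁ : P ⟶ A) (p₂ : P ⟶ X), IsPullback p₁ p₂ f p ∧ fib p₁)
    (fib_toOne : ∀ X : E, fib (one_isTerminal.from X)) : Clan E where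
  fib := fib
  one := one
  one_isTerminal := one_isTerminal
  fib_of_isIso := fib_of_isIso
  fib_comp := fib_comp
  carrable _ _ _ f _ hp :=
    let ⟨P, p₁, p₂, hP, _⟩ := exists_pullback f hp
    ⟨P, p₁, p₂, hP⟩
  fib_baseChange {_ _ _ _ p₁ p₂ f p} h hp := by
    obtain ⟨Q, q₁, q₂, hQ, hq₁⟩ := exists_pullback f hp
    rw [← h.isoIsPullback_hom_fst _ _ hQ]
    exact fib_comp (fib_of_isIso _ inferInstance) hq₁
  fib_toOne := fib_toOne

end Clan

namespace ReedyFibrantSq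

variable {E : Type u} [Category.{v} E] {C : Clan E}
  {A₀ A₁ B₀ B₁ : E} {f₀ : A₀ ⟶ B₀} {f₁ : A₁ ⟶ B₁} {a : A₀ ⟶ A₁} {b : B₀ ⟶ B₁}

lemma of_isPullback (hf₁ : C.fib f₁) (hb : C.fib b) {P : E} {p₁ : P ⟶ A₁} {p₂ : P ⟶ B₀}
    (hP : IsPullback p₁ p₂ f₁ b) {g : A₀ ⟶ P} (hg₁ : g ≫ p₁ = a) (hg₂ : g ≫ p₂ = f₀)
    (hg : C.fib g) : ReedyFibrantSq C f₀ f₁ a b := by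
  refine ⟨hf₁, hb, fun Q q₁ q₂ hQ g' hg'₁ hg'₂ => ?_⟩
  have hg' : g' = g ≫ (hP.isoIsPullback _ _ hQ).hom := by
    apply hQ.hom_ext <;> simp [hg₁, hg₂, hg'₁, hg'₂]
  rw [hg']
  exact C.fib_comp hg (C.fib_of_isIso _ inferInstance)

lemma exists_gap (h : ReedyFibrantSq C f₀ f₁ a b) (w : f₀ ≫ b = a ≫ f₁) :
    ∃ (P : E) (p₁ : P ⟶ A₁) (p₂ : P ⟶ B₀) (g : A₀ ⟶ P),
      IsPullback p₁ p₂ f₁ b ∧ g ≫ p₁ = a ∧ g ≫ p₂ = f₀ ∧ C.fib g := by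
  obtain ⟨P, p₁, p₂, hP⟩ := C.carrable f₁ h.2.1
  exact ⟨P, p₁, p₂, hP.lift a f₀ w.symm, hP, hP.lift_fst _ _ _, hP.lift_snd _ _ _,
    h.2.2 p₁ p₂ hP _ (hP.lift_fst _ _ _) (hP.lift_snd _ _ _)⟩

lemma fib_left (h : ReedyFibrantSq C f₀ f₁ a b) (w : f₀ ≫ b = a ≫ f₁) : C.fib f₀ := by
  obtain ⟨P, p₁, p₂, g, hP, -, rfl, hg⟩ := h.exists_gap w
  exact C.fib_comp hg (C.fib_baseChange hP.flip h.1)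

lemma of_isIso [IsIso f₀] [IsIso f₁] (hb : C.fib b) (w : f₀ ≫ b = a ≫ f₁) :
    ReedyFibrantSq C f₀ f₁ a b :=
  of_isPullback (C.fib_of_isIso f₁ inferInstance) hb (IsPullback.of_vert_isIso ⟨w.symm⟩)
    (Category.id_comp a) (Category.id_comp f₀) (C.fib_of_isIso _ inferInstance)

lemma of_id_right {f₀ : A₀ ⟶ B₁} (hf₁ : C.fib f₁) (ha : C.fib a) (w : a ≫ f₁ = f₀) :
    ReedyFibrantSq C f₀ f₁ a (𝟙 B₁) :=
  of_isPullback hf₁ (C.fib_of_isIso _ inferInstance) IsPullback.of_id_fst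
    (Category.comp_id a) w ha

lemma comp {C₀ C₁ : E} {g₀ : B₀ ⟶ C₀} {g₁ : B₁ ⟶ C₁} {c : C₀ ⟶ C₁}
    (hf : ReedyFibrantSq C f₀ f₁ a b) (hg : ReedyFibrantSq C g₀ g₁ b c)
    (wf : f₀ ≫ b = a ≫ f₁) (wg : g₀ ≫ c = b ≫ g₁) :
    ReedyFibrantSq C (f₀ ≫ g₀) (f₁ ≫ g₁) a c := by
  obtain ⟨R, r₁, r₂, gg, hR, hgg₁, hgg₂, hgg⟩ := hg.exists_gap wg
  obtain ⟨W, w₁, w₂, hW⟩ := C.carrable f₁ (C.fib_baseChange hR hg.2.1)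
  obtain ⟨Q, q₁, q₂, hQ⟩ := C.carrable w₂ hgg
  -- `Q = W ×_R B₀` is a pullback of `f₁` along `b`: the gap map of the composite square is the
  -- gap map of the first square into `Q` followed by `q₁`, a base change of the gap map `gg`.
  have hQ' : IsPullback (q₁ ≫ w₁) q₂ f₁ b := hgg₁ ▸ hQ.paste_horiz hW
  refine of_isPullback (C.fib_comp hf.1 hg.1) hg.2.1 (hW.paste_vert hR)
    (g := hQ'.lift a f₀ wf.symm ≫ q₁) (by simp) ?_
    (C.fib_comp (hf.2.2 _ _ hQ' _ (by simp) (by simp)) (C.fib_baseChange hQ hgg))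
  rw [Category.assoc, hQ.w_assoc, hgg₂, IsPullback.lift_snd_assoc]

end ReedyFibrantSq

namespace Clan

variable {E : Type u} [Category.{v} E] (C : Clan E)

lemma fib_to_one {X : E} (f : X ⟶ C.one) : C.fib f :=
  C.one_isTerminal.hom_ext (C.one_isTerminal.from X) f ▸ C.fib_toOne X

lemma exists_isPullback_arrow {x y z : Arrow E} (v : y ⟶ z) {u : x ⟶ z}
    (hu₀ : C.fib u.left) (hu₁ : C.fib u.right) :
    ∃ (P : Arrow E) (pr : P ⟶ y) (pi : P ⟶ x),
      IsPullback pr pi v u ∧ C.fib pr.left ∧ C.fib pr.right := by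
  obtain ⟨P₀, a₀, b₀, h₀⟩ := C.carrable v.left hu₀
  obtain ⟨P₁, a₁, b₁, h₁⟩ := C.carrable v.right hu₁
  have w : (a₀ ≫ y.hom) ≫ v.right = (b₀ ≫ x.hom) ≫ u.right := by
    rw [Category.assoc, Category.assoc, ← Arrow.w v, h₀.w_assoc, Arrow.w u]
  refine ⟨Arrow.mk (h₁.lift _ _ w), Arrow.homMk a₀ a₁ (h₁.lift_fst _ _ _).symm,
    Arrow.homMk b₀ b₁ (h₁.lift_snd _ _ _).symm,
    Arrow.isPullback_of_left_of_right (Arrow.hom_ext _ _ h₀.w h₁.w) h₀ h₁,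
    C.fib_baseChange h₀ hu₀, C.fib_baseChange h₁ hu₁⟩

def arrow : Clan (Arrow E) :=
  mk' (fun _ _ u => C.fib u.left ∧ C.fib u.right) (Arrow.mk (𝟙 C.one))
    C.one_isTerminal.arrowMkId
    (fun _ _ u _ => ⟨C.fib_of_isIso u.left inferInstance, C.fib_of_isIso u.right inferInstance⟩)
    (fun _ _ _ _ _ hu hv => ⟨C.fib_comp hu.1 hv.1, C.fib_comp hu.2 hv.2⟩)
    (fun _ _ _ v _ hu => C.exists_isPullback_arrow v hu.1 hu.2)
    (fun _ => ⟨C.fib_toOne _, C.fib_toOne _⟩)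

def reedyFib : MorphismProperty (Arrow E) :=
  fun x y u => ReedyFibrantSq C u.left u.right x.hom y.hom

lemma reedyFib_le_arrow_fib : C.reedyFib ≤ C.arrow.fib :=
  fun _ _ u hu => ⟨hu.fib_left u.w, hu.1⟩

lemma exists_isPullback_reedyFib {x y z : Arrow E} (hy : C.fib y.hom) (v : y ⟶ z) {u : x ⟶ z}
    (hu : C.reedyFib u) :
    ∃ (P : Arrow E) (pr : P ⟶ y) (pi : P ⟶ x),
      IsPullback pr pi v u ∧ C.reedyFib pr ∧ C.fib P.hom := by
  obtain ⟨Q, q₁, q₂, g, hQ, hg₁, hg₂, hg⟩ := hu.exists_gap u.w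
  obtain ⟨P₁, a₁, b₁, hP₁⟩ := C.carrable v.right hu.1
  obtain ⟨M, μ, m, hM⟩ := C.carrable a₁ hy
  -- `M = y₀ ×_{y₁} P₁` is also `y₀ ×_{z₀} Q`, both being `y₀ ×_{z₁} x₁`
  have hMQ := IsPullback.of_right'
    (Arrow.w v ▸ hM.paste_horiz hP₁.flip : IsPullback (μ ≫ b₁) m u.right (v.left ≫ z.hom)) hQ
  obtain ⟨P₀, n, n', hN⟩ := C.carrable (hQ.lift _ _ _) hg
  have hL : IsPullback (n ≫ m) n' v.left u.left := hg₂ ▸ hN.paste_horiz hMQ.flip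
  refine ⟨Arrow.mk (n ≫ μ), Arrow.homMk (n ≫ m) a₁ (by simp [hM.w]),
    Arrow.homMk n' b₁ ?_, Arrow.isPullback_of_left_of_right (Arrow.hom_ext _ _ hL.w hP₁.w) hL hP₁,
    ReedyFibrantSq.of_isPullback (C.fib_baseChange hP₁ hu.1) hy hM rfl rfl
      (C.fib_baseChange hN hg),
    C.fib_comp (C.fib_baseChange hN hg) (C.fib_baseChange hM hy)⟩
  simp [← hg₁, ← hN.w_assoc]

lemma exists_isPullback_fibArrow {x y z : FibArrow C} (v : y ⟶ z) {u : x ⟶ z}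
    (hu : C.reedyFib u.hom) :
    ∃ (P : FibArrow C) (pr : P ⟶ y) (pi : P ⟶ x),
      IsPullback pr pi v u ∧ IsPullback pr.hom pi.hom v.hom u.hom ∧ C.reedyFib pr.hom := by
  obtain ⟨P, pr, pi, hP, hpr, hPf⟩ := C.exists_isPullback_reedyFib y.property v.hom hu
  exact ⟨⟨P, hPf⟩, ObjectProperty.homMk pr, ObjectProperty.homMk pi,
    IsPullback.of_map (ObjectProperty.ι _) (ObjectProperty.hom_ext _ hP.w) hP, hP, hpr⟩

noncomputable def reedy : Clan (FibArrow C) :=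
  mk' (fun _ _ u => C.reedyFib u.hom) ⟨Arrow.mk (𝟙 C.one), C.fib_of_isIso (𝟙 C.one) inferInstance⟩
    (IsTerminal.isTerminalOfObj (ObjectProperty.ι _) _ C.one_isTerminal.arrowMkId)
    (fun _ y u _ =>
      have : IsIso u.hom := (ObjectProperty.ι _).map_isIso u
      ReedyFibrantSq.of_isIso y.property u.hom.w)
    (fun _ _ _ u v hu hv => hu.comp hv u.hom.w v.hom.w)
    (fun _ _ _ v _ hu =>
      let ⟨P, pr, pi, hP, _, hpr⟩ := C.exists_isPullback_fibArrow v hu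
      ⟨P, pr, pi, hP, hpr⟩)
    (fun x => ReedyFibrantSq.of_id_right (C.fib_to_one _) x.property (C.one_isTerminal.hom_ext _ _))

end Clan

/-- If `E` is a clan, then `E^(1)` (the category of fibrations of `E`
and commutative squares) is a clan whose fibrations are the Reedy fibrations, and
the inclusion `E^(1) ⥤ E^[1]` into the arrow category equipped with the pointwise
fibrations is a morphism of clans. -/
theorem fibArrow_clan_and_inclusion_clanMorphism
    {E : Type u} [Category.{v} E] (C : Clan E) :
    ∃ (CR : Clan (FibArrow C)) (CP : Clan (Arrow E)),
      (∀ {f g : Arrow E} (u : f ⟶ g), CP.fib u ↔ (C.fib u.left ∧ C.fib u.right)) ∧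
      (∀ {f g : FibArrow C} (u : f ⟶ g),
        CR.fib u ↔ ReedyFibrantSq C (FibArrow.homOf u).left (FibArrow.homOf u).right
          f.obj.hom g.obj.hom) ∧
      IsClanMorphism CR CP (ObjectProperty.ι _) := by
  refine ⟨C.reedy, C.arrow, fun _ => Iff.rfl, fun _ => Iff.rfl,
    ⟨fun _ _ u hu => C.reedyFib_le_arrow_fib u.hom hu, fun _ _ _ _ _ _ f _ h hp => ?_,
      ⟨C.one_isTerminal.arrowMkId⟩⟩⟩
  obtain ⟨Q, _, _, hQ, hQι, _⟩ := C.exists_isPullback_fibArrow f hp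
  exact (ObjectProperty.ι _).map_isPullback_of_map_isPullback h hQ hQι
end

section
/- In a clan, the composite of two fibrant spans is fibrant: if X = (X, λ_X : X → A, ρ_X : X → B) and Y = (Y, λ_Y : Y → B, ρ_Y : Y → C) are spans such that the maps (λ_X, ρ_X) : X → A × B and (λ_Y, ρ_Y) : Y → B × C are fibrations, then the pullback X ×_B Y of ρ_X along λ_Y exists and the induced map (λ, ρ) : X ×_B Y → A × C, given by λ = λ_X ∘ p₁ and ρ = ρ_Y ∘ p₂, is a fibration. -/
open CategoryTheory CategoryTheory.Limits

universe w v u v' u' v'' u''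

/-- In a clan, the composite of two fibrant spans is fibrant.
Products are witnessed by pullback squares over the terminal object, and a span
`(λ, ρ) : X → A × B` is fibrant when its pairing map into the product is a
fibration. -/
theorem fibrantSpan_comp {E : Type u} [Category.{v} E] (C : Clan E)
    {A B Z X Y : E}
    (lX : X ⟶ A) (rX : X ⟶ B) (lY : Y ⟶ B) (rY : Y ⟶ Z)
    {AB : E} (pab₁ : AB ⟶ A) (pab₂ : AB ⟶ B)
    (hAB : IsPullback pab₁ pab₂ (C.one_isTerminal.from A) (C.one_isTerminal.from B))
    {BZ : E} (pbz₁ : BZ ⟶ B) (pbz₂ : BZ ⟶ Z)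
    (hBZ : IsPullback pbz₁ pbz₂ (C.one_isTerminal.from B) (C.one_isTerminal.from Z))
    {AZ : E} (paz₁ : AZ ⟶ A) (paz₂ : AZ ⟶ Z)
    (hAZ : IsPullback paz₁ paz₂ (C.one_isTerminal.from A) (C.one_isTerminal.from Z))
    (gX : X ⟶ AB) (hgX₁ : gX ≫ pab₁ = lX) (hgX₂ : gX ≫ pab₂ = rX) (hfibX : C.fib gX)
    (gY : Y ⟶ BZ) (hgY₁ : gY ≫ pbz₁ = lY) (hgY₂ : gY ≫ pbz₂ = rY) (hfibY : C.fib gY) :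
    ∃ (P : E) (q₁ : P ⟶ X) (q₂ : P ⟶ Y), IsPullback q₁ q₂ rX lY ∧
      ∀ g : P ⟶ AZ, g ≫ paz₁ = q₁ ≫ lX → g ≫ paz₂ = q₂ ≫ rY → C.fib g := by

  -- projections of product squares are fibrations
  have fib_pab₂ : C.fib pab₂ := C.fib_baseChange hAB.flip (C.fib_toOne A)
  have fib_pbz₂ : C.fib pbz₂ := C.fib_baseChange hBZ.flip (C.fib_toOne B)
  have fib_rX : C.fib rX := hgX₂ ▸ C.fib_comp hfibX fib_pab₂
  -- the pullback P = X ×_B Y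
  obtain ⟨P, q₂, q₁, hP⟩ := C.carrable lY fib_rX
  -- W = A × Y, as pullback of pab₂ along lY
  obtain ⟨W, w₁, w₂, hW⟩ := C.carrable lY fib_pab₂
  -- V = A × BZ
  obtain ⟨V, v₁, v₂, hV⟩ := C.carrable (C.one_isTerminal.from BZ) (C.fib_toOne A)
  -- u : P → W
  have hucomm : q₂ ≫ lY = (q₁ ≫ gX) ≫ pab₂ := by
    rw [Category.assoc, hgX₂]; exact hP.w
  set u : P ⟶ W := hW.lift q₂ (q₁ ≫ gX) hucomm with hu_def
  have hu₁ : u ≫ w₁ = q₂ := hW.lift_fst _ _ _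
  have hu₂ : u ≫ w₂ = q₁ ≫ gX := hW.lift_snd _ _ _
  -- u is a base change of gX, hence a fibration
  have hu : IsPullback u q₁ w₂ gX := by
    apply IsPullback.of_right _ hu₂ hW
    rw [hu₁, hgX₂]; exact hP
  have fib_u : C.fib u := C.fib_baseChange hu hfibX
  -- m1 : W → V
  set m1 : W ⟶ V := hV.lift (w₁ ≫ gY) (w₂ ≫ pab₁)
    (C.one_isTerminal.hom_ext _ _) with hm1_def
  have hm1₁ : m1 ≫ v₁ = w₁ ≫ gY := hV.lift_fst _ _ _
  have hm1₂ : m1 ≫ v₂ = w₂ ≫ pab₁ := hV.lift_snd _ _ _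
  -- W is the product A × Y
  have hWprod : IsPullback (w₂ ≫ pab₁) w₁ (C.one_isTerminal.from A)
      (lY ≫ C.one_isTerminal.from B) := IsPullback.paste_horiz hW.flip hAB
  -- m1 is a base change of gY, hence a fibration
  have hm1 : IsPullback m1 w₁ v₁ gY := by
    apply IsPullback.of_right _ hm1₁ hV.flip
    rw [hm1₂]
    have : gY ≫ C.one_isTerminal.from BZ = lY ≫ C.one_isTerminal.from B :=
      C.one_isTerminal.hom_ext _ _
    rw [this]; exact hWprod
  have fib_m1 : C.fib m1 := C.fib_baseChange hm1 hfibY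
  -- m2 : V → AZ
  set m2 : V ⟶ AZ := hAZ.lift v₂ (v₁ ≫ pbz₂) (C.one_isTerminal.hom_ext _ _) with hm2_def
  have hm2₁ : m2 ≫ paz₁ = v₂ := hAZ.lift_fst _ _ _
  have hm2₂ : m2 ≫ paz₂ = v₁ ≫ pbz₂ := hAZ.lift_snd _ _ _
  -- m2 is a base change of pbz₂, hence a fibration
  have hm2 : IsPullback m2 v₁ paz₂ pbz₂ := by
    apply IsPullback.of_right _ hm2₂ hAZ
    rw [hm2₁]
    have : pbz₂ ≫ C.one_isTerminal.from Z = C.one_isTerminal.from BZ :=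
      C.one_isTerminal.hom_ext _ _
    rw [this]; exact hV.flip
  have fib_m2 : C.fib m2 := C.fib_baseChange hm2 fib_pbz₂
  refine ⟨P, q₁, q₂, hP.flip, ?_⟩
  intro g hg₁ hg₂
  have hg : g = u ≫ m1 ≫ m2 := by
    apply hAZ.hom_ext
    · rw [hg₁]
      calc q₁ ≫ lX = q₁ ≫ gX ≫ pab₁ := by rw [hgX₁]
        _ = (u ≫ w₂) ≫ pab₁ := by rw [hu₂, Category.assoc]
        _ = u ≫ m1 ≫ v₂ := by rw [Category.assoc, ← hm1₂]
        _ = (u ≫ m1) ≫ m2 ≫ paz₁ := by rw [hm2₁, Category.assoc]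
        _ = (u ≫ m1 ≫ m2) ≫ paz₁ := by simp only [Category.assoc]
    · rw [hg₂]
      calc q₂ ≫ rY = q₂ ≫ gY ≫ pbz₂ := by rw [hgY₂]
        _ = (u ≫ w₁) ≫ gY ≫ pbz₂ := by rw [hu₁]
        _ = u ≫ (m1 ≫ v₁) ≫ pbz₂ := by rw [hm1₁]; simp only [Category.assoc]
        _ = (u ≫ m1) ≫ m2 ≫ paz₂ := by rw [hm2₂]; simp only [Category.assoc]
        _ = (u ≫ m1 ≫ m2) ≫ paz₂ := by simp only [Category.assoc]
  rw [hg]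
  exact C.fib_comp fib_u (C.fib_comp fib_m1 fib_m2)
end

section
/- (Beck–Chevalley law) Let E be a locally cartesian closed category and suppose the commutative square with maps g : C → D, u : C → A, f : A → B, v : D → B (f∘u = v∘g) is cartesian. Then there are natural isomorphisms of functors u_! ∘ g* ≅ f* ∘ v_! : E/D → E/A and g_* ∘ u* ≅ v* ∘ f_* : E/A → E/D. -/
/-!
Pulling `y : Over D` back along `g` and pasting with the cartesian square exhibits the result,
viewed over `A` through `u`, as the pullback of `y.hom ≫ v` along `f`; this gives
`u_! ∘ g* ≅ f* ∘ v_!`, once every right adjoint of `w_!` is identified with `Over.pullback w`.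
Both sides of the second isomorphism are right adjoints of the two sides of the first
(`u_! g* ⊣ g_* u*` and `f* v_! ⊣ v* f_*`), so it is the conjugate of the first.
-/

open CategoryTheory CategoryTheory.Limits

universe v u

namespace CategoryTheory.IsPullback

variable {E : Type u} [Category.{v} E] {A B C D : E} {g : C ⟶ D} {u : C ⟶ A} {f : A ⟶ B}
  {v : D ⟶ B}

lemma pullback_fst_snd_comp (sq : IsPullback u g f v) (y : Over D) [HasPullback y.hom g] :
    IsPullback (pullback.fst y.hom g) (pullback.snd y.hom g ≫ u) (y.hom ≫ v) f :=
  (IsPullback.of_hasPullback y.hom g).paste_vert sq.flip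

noncomputable def pullbackMapIsoMapPullback [HasPullbacksAlong g] [HasPullbacksAlong f]
    (sq : IsPullback u g f v) :
    Over.pullback g ⋙ Over.map u ≅ Over.map v ⋙ Over.pullback f :=
  NatIso.ofComponents
    (fun y => Over.isoMk (sq.pullback_fst_snd_comp y).isoPullback (by simp)) <| by
    intro y y' k
    ext
    -- `erw`: the cospan of `(Over.map v).obj y` is `y.hom ≫ v` only up to unfolding `Over.map`
    apply pullback.hom_ext
    · simp
      erw [pullback.lift_fst, pullback.lift_fst, IsPullback.isoPullback_hom_fst_assoc]
    · simp
      erw [pullback.lift_snd, IsPullback.isoPullback_hom_snd, pullback.lift_snd_assoc]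

noncomputable def rightAdjointMapIsoMapRightAdjoint [HasPullbacksAlong g] [HasPullbacksAlong f]
    (sq : IsPullback u g f v) {G : Over D ⥤ Over C} {F : Over B ⥤ Over A}
    (adjG : Over.map g ⊣ G) (adjF : Over.map f ⊣ F) :
    G ⋙ Over.map u ≅ Over.map v ⋙ F :=
  Functor.isoWhiskerRight (adjG.rightAdjointUniq (Over.mapPullbackAdj g)) (Over.map u) ≪≫
    sq.pullbackMapIsoMapPullback ≪≫
    Functor.isoWhiskerLeft (Over.map v) (adjF.rightAdjointUniq (Over.mapPullbackAdj f)).symm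

end CategoryTheory.IsPullback

/-- Beck–Chevalley law: Let `E` be a locally cartesian closed category,
locally cartesian closedness being witnessed by base change functors `pb w` right
adjoint to the postcomposition functors `Over.map w` (`w_!`), together with
pushforward functors `pf w` (`w_*`) right adjoint to `pb w` (`w*`).  If the square
`g : C ⟶ D`, `u : C ⟶ A`, `f : A ⟶ B`, `v : D ⟶ B` (with `u ≫ f = g ≫ v`) is
cartesian, then `u_! ∘ g* ≅ f* ∘ v_!` and `g_* ∘ u* ≅ v* ∘ f_*`. -/
theorem beck_chevalley {E : Type u} [Category.{v} E] [HasFiniteLimits E]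
    (pb : ∀ {X Y : E}, (X ⟶ Y) → (Over Y ⥤ Over X))
    (adj₁ : ∀ {X Y : E} (w : X ⟶ Y), Over.map w ⊣ pb w)
    (pf : ∀ {X Y : E}, (X ⟶ Y) → (Over X ⥤ Over Y))
    (adj₂ : ∀ {X Y : E} (w : X ⟶ Y), pb w ⊣ pf w)
    {A B C D : E} (g : C ⟶ D) (u : C ⟶ A) (f : A ⟶ B) (v : D ⟶ B)
    (sq : IsPullback u g f v) :
    Nonempty (pb g ⋙ Over.map u ≅ Over.map v ⋙ pb f) ∧
      Nonempty (pb u ⋙ pf g ≅ pf f ⋙ pb v) := by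
  let iso₁ : pb g ⋙ Over.map u ≅ Over.map v ⋙ pb f :=
    sq.rightAdjointMapIsoMapRightAdjoint (adj₁ g) (adj₁ f)
  exact ⟨⟨iso₁⟩,
    ⟨conjugateIsoEquiv ((adj₂ g).comp (adj₁ u)) ((adj₁ v).comp (adj₂ f)) iso₁.symm⟩⟩
end

section
/- In a locally cartesian closed category E, the composite of two polynomial functors is naturally isomorphic to a polynomial functor: given polynomial spans I ←s E' →p A →t J and J ←u F →q B →v K, there exists a polynomial span I ←s' R →p' D →t' K whose associated polynomial functor E/I → E/K is naturally isomorphic to the composite of the polynomial functors associated to the two given spans. -/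
/-!
For `c` over `X`, a functor `G : E/X ⥤ E/Y` restricts to a functor `E/c.left ⥤ E/(G c).left`
between slices (through `E/c.left ≌ (E/X)/c`), and `Σ_c ⋙ G ≅ G|_c ⋙ Σ_{G c}`. Restriction
preserves adjunctions up to a `Σ` along the counit, and the restriction of `Σ_f` is the identity;
so if `Σ_f ⊣ G` then `G|_c ≅ Δ_ε` for the counit `ε` at `c`. For `G = Δ_k` this yields the
Beck–Chevalley isomorphism `Σ_h ⋙ Δ_k ≅ Δ ⋙ Σ`, whose mate is `Π_h ⋙ Δ_k ≅ Δ ⋙ Π`. For `G = Π_q`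
the left adjoint `Δ_q` restricts to some `Δ_{q'}`, so `Π_q|_c`, being right adjoint to
`Δ_{q'} ⋙ Σ_e`, is `Δ_e ⋙ Π_{q'}`; this is distributivity `Σ_h ⋙ Π_q ≅ Δ_e ⋙ Π_{q'} ⋙ Σ_g`.
These three isomorphisms move every `Δ` of `Δ_s Π_p Σ_t Δ_u Π_q Σ_v` to the left and every `Σ`
to the right, and composites of `Δ`s, `Π`s and `Σ`s are again single ones.
-/

open CategoryTheory CategoryTheory.Limits

universe v u

namespace CategoryTheory.Over

variable {C : Type*} [Category C] {X Y : C}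

def sliceFunctor (G : Over X ⥤ Over Y) (c : Over X) : Over c.left ⥤ Over (G.obj c).left :=
  c.iteratedSliceBackward ⋙ post G ⋙ (G.obj c).iteratedSliceForward

def iteratedSliceForwardCompMapIso (f : Over X) :
    f.iteratedSliceForward ⋙ map f.hom ≅ forget f :=
  NatIso.ofComponents (fun α => isoMk (Iso.refl _) ((Category.id_comp _).trans (w α.hom).symm))
    (fun _ => by ext; exact (Category.comp_id _).trans (Category.id_comp _).symm)

def sliceFunctorCompMapIso (G : Over X ⥤ Over Y) (c : Over X) :
    sliceFunctor G c ⋙ map (G.obj c).hom ≅ map c.hom ⋙ G :=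
  Functor.isoWhiskerLeft (c.iteratedSliceBackward ⋙ post G)
    (iteratedSliceForwardCompMapIso (G.obj c))

def sliceAdjunction {F : Over Y ⥤ Over X} {G : Over X ⥤ Over Y} (adj : F ⊣ G) (c : Over X) :
    sliceFunctor F (G.obj c) ⋙ map (adj.counit.app c).left ⊣ sliceFunctor G c :=
  (G.obj c).iteratedSliceEquiv.symm.toAdjunction.comp
    ((postAdjunctionRight adj).comp c.iteratedSliceEquiv.toAdjunction)

def sliceFunctorMapIso (f : X ⟶ Y) (c : Over X) : sliceFunctor (map f) c ≅ 𝟭 _ :=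
  NatIso.ofComponents (fun _ => isoMk (Iso.refl _) (Category.id_comp _))
    (fun _ => by ext; exact (Category.comp_id _).trans (Category.id_comp _).symm)

def mapSliceAdjunction {f : X ⟶ Y} {G : Over Y ⥤ Over X} (adj : map f ⊣ G) (c : Over Y) :
    map (adj.counit.app c).left ⊣ sliceFunctor G c :=
  (sliceAdjunction adj c).ofNatIsoLeft
    (Functor.isoWhiskerRight (sliceFunctorMapIso f _) _ ≪≫ Functor.leftUnitor _)

end CategoryTheory.Over

section LocallyCartesianClosed

open Over

variable {E : Type u} [Category.{v} E] (pb : ∀ {X Y : E}, (X ⟶ Y) → (Over Y ⥤ Over X))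
  (adj₁ : ∀ {X Y : E} (w : X ⟶ Y), Over.map w ⊣ pb w)
  (pf : ∀ {X Y : E}, (X ⟶ Y) → (Over X ⥤ Over Y))
  (adj₂ : ∀ {X Y : E} (w : X ⟶ Y), pb w ⊣ pf w)

def pbCompIso {X Y Z : E} (f : X ⟶ Y) (g : Y ⟶ Z) : pb (f ≫ g) ≅ pb g ⋙ pb f :=
  conjugateIsoEquiv (adj₁ (f ≫ g)) ((adj₁ f).comp (adj₁ g)) (mapComp f g).symm

def pfCompIso {X Y Z : E} (f : X ⟶ Y) (g : Y ⟶ Z) : pf (f ≫ g) ≅ pf f ⋙ pf g :=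
  conjugateIsoEquiv (adj₂ (f ≫ g)) ((adj₂ g).comp (adj₂ f)) (pbCompIso pb adj₁ f g).symm

def sliceFunctorPbIso {X Y : E} (k : X ⟶ Y) (c : Over Y) :
    sliceFunctor (pb k) c ≅ pb ((adj₁ k).counit.app c).left :=
  (mapSliceAdjunction (adj₁ k) c).rightAdjointUniq (adj₁ _)

include adj₁ in
theorem exists_map_comp_pb_iso {X Y Z : E} (h : X ⟶ Z) (k : Y ⟶ Z) :
    ∃ (P : E) (a : P ⟶ X) (b : P ⟶ Y), Nonempty (map h ⋙ pb k ≅ pb a ⋙ map b) :=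
  ⟨_, _, _, ⟨(sliceFunctorCompMapIso (pb k) (mk h)).symm ≪≫
    Functor.isoWhiskerRight (sliceFunctorPbIso pb adj₁ k (mk h)) _⟩⟩

include adj₁ adj₂ in
theorem exists_pf_comp_pb_iso {X Y Z : E} (h : X ⟶ Z) (k : Y ⟶ Z) :
    ∃ (P : E) (a : P ⟶ X) (b : P ⟶ Y), Nonempty (pf h ⋙ pb k ≅ pb a ⋙ pf b) := by
  obtain ⟨P, b, a, ⟨bc⟩⟩ := exists_map_comp_pb_iso pb adj₁ k h
  exact ⟨P, a, b, ⟨conjugateIsoEquiv ((adj₁ k).comp (adj₂ h)) ((adj₂ b).comp (adj₁ a)) bc.symm⟩⟩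

include adj₁ adj₂ in
theorem exists_map_comp_pf_iso {M X Y : E} (h : M ⟶ X) (q : X ⟶ Y) :
    ∃ (D N : E) (e : N ⟶ M) (q' : N ⟶ D) (g : D ⟶ Y),
      Nonempty (map h ⋙ pf q ≅ pb e ⋙ pf q' ⋙ map g) := by
  let d := (pf q).obj (mk h)
  let e := ((adj₂ q).counit.app (mk h)).left
  let q' := ((adj₁ q).counit.app d).left
  have slice : sliceFunctor (pf q) (mk h) ≅ pb e ⋙ pf q' :=
    conjugateIsoEquiv (sliceAdjunction (adj₂ q) (mk h)) ((adj₂ q').comp (adj₁ e))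
      (Functor.isoWhiskerRight (sliceFunctorPbIso pb adj₁ q d).symm (map e))
  exact ⟨_, _, e, q', d.hom, ⟨(sliceFunctorCompMapIso (pf q) (mk h)).symm ≪≫
    Functor.isoWhiskerRight slice (map d.hom)⟩⟩

end LocallyCartesianClosed

theorem polynomial_comp_general {E : Type u} [Category.{v} E]
    (pb : ∀ {X Y : E}, (X ⟶ Y) → (Over Y ⥤ Over X))
    (adj₁ : ∀ {X Y : E} (w : X ⟶ Y), Over.map w ⊣ pb w)
    (pf : ∀ {X Y : E}, (X ⟶ Y) → (Over X ⥤ Over Y))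
    (adj₂ : ∀ {X Y : E} (w : X ⟶ Y), pb w ⊣ pf w)
    {I A J B K E' F : E}
    (s : E' ⟶ I) (p : E' ⟶ A) (t : A ⟶ J)
    (u : F ⟶ J) (q : F ⟶ B) (v : B ⟶ K) :
    ∃ (R D : E) (s' : R ⟶ I) (p' : R ⟶ D) (t' : D ⟶ K),
      Nonempty (((pb s ⋙ pf p ⋙ Over.map t) ⋙ (pb u ⋙ pf q ⋙ Over.map v)) ≅
        pb s' ⋙ pf p' ⋙ Over.map t') := by
  obtain ⟨P, k, h, ⟨bc₁⟩⟩ := exists_map_comp_pb_iso pb adj₁ t u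
  obtain ⟨Q, b, a, ⟨bc₂⟩⟩ := exists_pf_comp_pb_iso pb adj₁ pf adj₂ p k
  obtain ⟨D, N, e, q', g, ⟨distrib⟩⟩ := exists_map_comp_pf_iso pb adj₁ pf adj₂ h q
  obtain ⟨R, b', a', ⟨bc₃⟩⟩ := exists_pf_comp_pb_iso pb adj₁ pf adj₂ a e
  refine ⟨R, D, b' ≫ b ≫ s, a' ≫ q', g ≫ v, ⟨?_⟩⟩
  open Functor in
  calc (pb s ⋙ pf p ⋙ Over.map t) ⋙ pb u ⋙ pf q ⋙ Over.map v
      ≅ pb s ⋙ pf p ⋙ (pb k ⋙ Over.map h) ⋙ pf q ⋙ Over.map v :=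
        isoWhiskerLeft (pb s) (isoWhiskerLeft (pf p) (isoWhiskerRight bc₁ (pf q ⋙ Over.map v)))
    _ ≅ pb s ⋙ (pb b ⋙ pf a) ⋙ Over.map h ⋙ pf q ⋙ Over.map v :=
        isoWhiskerLeft (pb s) (isoWhiskerRight bc₂ (Over.map h ⋙ pf q ⋙ Over.map v))
    _ ≅ pb s ⋙ pb b ⋙ pf a ⋙ (pb e ⋙ pf q' ⋙ Over.map g) ⋙ Over.map v :=
        isoWhiskerLeft (pb s ⋙ pb b ⋙ pf a) (isoWhiskerRight distrib (Over.map v))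
    _ ≅ pb s ⋙ pb b ⋙ (pb b' ⋙ pf a') ⋙ pf q' ⋙ Over.map g ⋙ Over.map v :=
        isoWhiskerLeft (pb s ⋙ pb b) (isoWhiskerRight bc₃ (pf q' ⋙ Over.map g ⋙ Over.map v))
    _ ≅ pb (b' ≫ b ≫ s) ⋙ pf (a' ≫ q') ⋙ Over.map (g ≫ v) :=
        (NatIso.hcomp (pbCompIso pb adj₁ b' (b ≫ s) ≪≫ isoWhiskerRight (pbCompIso pb adj₁ b s) _)
          (NatIso.hcomp (pfCompIso pb adj₁ pf adj₂ a' q') (Over.mapComp g v))).symm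

/-- In a locally cartesian closed category (local cartesian closedness
witnessed by base change functors `pb w ⊣ pf w`, with `pb w` right adjoint to the
postcomposition functor `Over.map w`), the composite of the polynomial functors
associated to two polynomial spans `I ←s E' →p A →t J` and `J ←u F →q B →v K` is
naturally isomorphic to the polynomial functor of a polynomial span
`I ←s' R →p' D →t' K`. -/
theorem polynomial_comp {E : Type u} [Category.{v} E] [HasFiniteLimits E]
    (pb : ∀ {X Y : E}, (X ⟶ Y) → (Over Y ⥤ Over X))
    (adj₁ : ∀ {X Y : E} (w : X ⟶ Y), Over.map w ⊣ pb w)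
    (pf : ∀ {X Y : E}, (X ⟶ Y) → (Over X ⥤ Over Y))
    (adj₂ : ∀ {X Y : E} (w : X ⟶ Y), pb w ⊣ pf w)
    {I A J B K E' F : E}
    (s : E' ⟶ I) (p : E' ⟶ A) (t : A ⟶ J)
    (u : F ⟶ J) (q : F ⟶ B) (v : B ⟶ K) :
    ∃ (R D : E) (s' : R ⟶ I) (p' : R ⟶ D) (t' : D ⟶ K),
      Nonempty (((pb s ⋙ pf p ⋙ Over.map t) ⋙ (pb u ⋙ pf q ⋙ Over.map v)) ≅
        pb s' ⋙ pf p' ⋙ Over.map t') :=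
  polynomial_comp_general pb adj₁ pf adj₂ s p t u q v
end

section
/- A map u : A → B in a tribe is anodyne if and only if it is a strong deformation retract, i.e. there exist a retraction r : B → A with r∘u = 1_A and, for a path object (PB, ∂₀, ∂₁, σ) for B, a map h : B → PB with ∂₀∘h = u∘r, ∂₁∘h = 1_B and h∘u = σ∘u. -/
/-!
Anodyne ⇒ strong deformation retract: lifting `u` against `A ↠ 1` gives the retraction `r`,
and lifting it against the fibration `PB ↠ B × B` extends the constant homotopy `σ ∘ u`
to a homotopy `h` from `u ∘ r` to `1_B`.

Strong deformation retract ⇒ anodyne: after pulling back, it suffices to extend a partial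
section `v` of a fibration `q : Z ↠ B` along `u`. Transport along paths in `B` is a lift of the
anodyne map `Z → d₀^* Z, z ↦ (σ (q z), z)` against `q`; transporting `v ∘ r` along `h` gives
the section.
-/

open CategoryTheory CategoryTheory.Limits

universe w v u v' u' v'' u''

/-- A map in a clan is *anodyne* if it has the left lifting property with respect to
every fibration. -/
def Anodyne {E : Type u} [Category.{v} E] (C : Clan E) : MorphismProperty E :=
  fun _ _ u => ∀ ⦃X Y : E⦄ (f : X ⟶ Y), C.fib f → HasLiftingProperty u f

/-- A *tribe* is a clan in which every map factors as an anodyne map followed by a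
fibration, and every base change of an anodyne map along a fibration is anodyne. -/
structure Tribe (E : Type u) [Category.{v} E] extends Clan E where
  exists_fact : ∀ ⦃A B : E⦄ (f : A ⟶ B), ∃ (Z : E) (u : A ⟶ Z) (p : Z ⟶ B),
    Anodyne toClan u ∧ fib p ∧ u ≫ p = f
  anodyne_baseChange : ∀ ⦃P A X B : E⦄ {p₁ : P ⟶ A} {p₂ : P ⟶ X} {f : A ⟶ B} {u : X ⟶ B},
    IsPullback p₁ p₂ f u → fib f → Anodyne toClan u → Anodyne toClan p₁

/-- A *path object* for `B`: a factorization of the diagonal `B ⟶ B × B` as an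
anodyne map `σ` followed by a fibration `(∂₀, ∂₁)`.  The product `B × B` is
witnessed by a pullback square over the terminal object. -/
structure PathObj {E : Type u} [Category.{v} E] (T : Tribe E) (B : E) where
  P : E
  σ : B ⟶ P
  d₀ : P ⟶ B
  d₁ : P ⟶ B
  σ_d₀ : σ ≫ d₀ = 𝟙 B
  σ_d₁ : σ ≫ d₁ = 𝟙 B
  anodyne_σ : Anodyne T.toClan σ
  BB : E
  pr₁ : BB ⟶ B
  pr₂ : BB ⟶ B
  isProd : IsPullback pr₁ pr₂ (T.one_isTerminal.from B) (T.one_isTerminal.from B)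
  pair : P ⟶ BB
  pair_pr₁ : pair ≫ pr₁ = d₀
  pair_pr₂ : pair ≫ pr₂ = d₁
  fib_pair : T.fib pair

/-- Two maps `f g : A ⟶ B` in a tribe are *homotopic* if there are a path object for
`B` and a homotopy `H : A ⟶ PB` with `∂₀ ∘ H = f` and `∂₁ ∘ H = g`. -/
def Homotopic {E : Type u} [Category.{v} E] (T : Tribe E) {A B : E} (f g : A ⟶ B) : Prop :=
  ∃ (Q : PathObj T B) (H : A ⟶ Q.P), H ≫ Q.d₀ = f ∧ H ≫ Q.d₁ = g

/-- A map is a *homotopy equivalence* if it admits a homotopy inverse. -/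
def IsHomotopyEquiv {E : Type u} [Category.{v} E] (T : Tribe E) {X Y : E} (f : X ⟶ Y) : Prop :=
  ∃ g : Y ⟶ X, Homotopic T (f ≫ g) (𝟙 X) ∧ Homotopic T (g ≫ f) (𝟙 Y)

/-- The local category `E(A)` of a tribe: the full subcategory of `Over A` spanned
by the fibrations `X ↠ A`. -/
abbrev TribeSlice {E : Type u} [Category.{v} E] (T : Tribe E) (A : E) :=
  ObjectProperty.FullSubcategory (fun X : Over A => T.fib X.hom)

/-- The underlying morphism of `Over A` of a morphism of `TribeSlice T A`. -/
def TribeSlice.homOf {E : Type u} [Category.{v} E] {T : Tribe E} {A : E}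
    {X Y : TribeSlice T A} (u : X ⟶ Y) : X.obj ⟶ Y.obj := u.hom

/-- A *morphism of tribes* is a morphism of clans that moreover takes anodyne maps
to anodyne maps. -/
structure IsTribeMorphism {E : Type u} {E' : Type u'} [Category.{v} E] [Category.{v'} E']
    (T : Tribe E) (T' : Tribe E') (F : E ⥤ E')
    extends IsClanMorphism T.toClan T'.toClan F : Prop where
  map_anodyne : ∀ ⦃A B : E⦄ (u : A ⟶ B), Anodyne T.toClan u → Anodyne T'.toClan (F.map u)

/-- The homotopy relation, as a `HomRel`; the homotopy category `Ho(E)` is the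
quotient of `E` by this congruence. -/
def HoRel {E : Type u} [Category.{v} E] (T : Tribe E) : HomRel E :=
  fun {_ _} f g => Homotopic T f g

section

variable {E : Type u} [Category.{v} E]

theorem Clan.exists_retraction_of_anodyne (C : Clan E) {A B : E} {u : A ⟶ B}
    (hu : Anodyne C u) : ∃ r : B ⟶ A, u ≫ r = 𝟙 A :=
  have := hu _ (C.fib_toOne A)
  have sq : CommSq (𝟙 A) u (C.one_isTerminal.from A) (C.one_isTerminal.from B) :=
    ⟨C.one_isTerminal.hom_ext _ _⟩
  ⟨sq.lift, sq.fac_left⟩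

theorem Clan.anodyne_of_forall_exists_section (C : Clan E) {A B : E} {u : A ⟶ B}
    (H : ∀ ⦃Z : E⦄ (q : Z ⟶ B), C.fib q → ∀ v : A ⟶ Z, v ≫ q = u →
      ∃ s : B ⟶ Z, s ≫ q = 𝟙 B ∧ u ≫ s = v) :
    Anodyne C u := by
  intro X Y f hf
  refine ⟨fun {a b} sq => ?_⟩
  obtain ⟨Z, q, p, hpb⟩ := C.carrable b hf
  obtain ⟨s, hsq, hus⟩ :=
    H q (C.fib_baseChange hpb hf) (hpb.lift u a sq.w.symm) (hpb.lift_fst _ _ _)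
  refine ⟨⟨⟨s ≫ p, ?_, ?_⟩⟩⟩
  · rw [← Category.assoc, hus, hpb.lift_snd]
  · rw [Category.assoc, ← hpb.w, ← Category.assoc, hsq, Category.id_comp]

theorem Tribe.nonempty_pathObj (T : Tribe E) (B : E) : Nonempty (PathObj T B) := by
  obtain ⟨BB, pr₁, pr₂, hProd⟩ := T.carrable (T.one_isTerminal.from B) (T.fib_toOne B)
  obtain ⟨P, σ, pair, hσ, hpair, hfact⟩ :=
    T.exists_fact (hProd.lift (𝟙 B) (𝟙 B) (T.one_isTerminal.hom_ext _ _))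
  exact ⟨{ P, σ, d₀ := pair ≫ pr₁, d₁ := pair ≫ pr₂
           σ_d₀ := by rw [← Category.assoc, hfact, hProd.lift_fst]
           σ_d₁ := by rw [← Category.assoc, hfact, hProd.lift_snd]
           anodyne_σ := hσ, BB, pr₁, pr₂, isProd := hProd, pair
           pair_pr₁ := rfl, pair_pr₂ := rfl, fib_pair := hpair }⟩

namespace PathObj

variable {T : Tribe E} {B : E} (Q : PathObj T B)

theorem exists_homotopy_extension_of_anodyne {A X : E} {u : A ⟶ X} (hu : Anodyne T.toClan u)
    (f g : X ⟶ B) (c : A ⟶ Q.P) (hc₀ : c ≫ Q.d₀ = u ≫ f) (hc₁ : c ≫ Q.d₁ = u ≫ g) :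
    ∃ H : X ⟶ Q.P, H ≫ Q.d₀ = f ∧ H ≫ Q.d₁ = g ∧ u ≫ H = c := by
  have := hu _ Q.fib_pair
  set β := Q.isProd.lift f g (T.one_isTerminal.hom_ext _ _)
  have β_d₀ : β ≫ Q.pr₁ = f := Q.isProd.lift_fst _ _ _
  have β_d₁ : β ≫ Q.pr₂ = g := Q.isProd.lift_snd _ _ _
  have sq : CommSq c u Q.pair β := ⟨Q.isProd.hom_ext
    (by rw [Category.assoc, Category.assoc, Q.pair_pr₁, hc₀, β_d₀])
    (by rw [Category.assoc, Category.assoc, Q.pair_pr₂, hc₁, β_d₁])⟩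
  refine ⟨sq.lift, ?_, ?_, sq.fac_left⟩
  · rw [← Q.pair_pr₁, ← Category.assoc, sq.fac_right, β_d₀]
  · rw [← Q.pair_pr₂, ← Category.assoc, sq.fac_right, β_d₁]

/-- Transport along paths of `B` in a fibration `q : Z ↠ B`; `W` is the object of pairs of a
path `γ` and a point over its source `d₀ γ`, and `i` is the inclusion of the constant paths. -/
theorem exists_transport {Z W : E} {q : Z ⟶ B} (hq : T.fib q) {w₁ : W ⟶ Q.P} {w₂ : W ⟶ Z}
    (hW : IsPullback w₁ w₂ Q.d₀ q) {i : Z ⟶ W} (hi₁ : i ≫ w₁ = q ≫ Q.σ)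
    (hi₂ : i ≫ w₂ = 𝟙 Z) : ∃ τ : W ⟶ Z, i ≫ τ = 𝟙 Z ∧ τ ≫ q = w₁ ≫ Q.d₁ := by
  -- `i` is a base change of the anodyne map `σ` along the fibration `w₁`.
  have hi : IsPullback i q w₁ Q.σ :=
    IsPullback.of_right (by rw [hi₂, Q.σ_d₀]; exact IsPullback.of_horiz_isIso ⟨by simp⟩)
      hi₁ hW.flip
  have := T.anodyne_baseChange hi (T.fib_baseChange hW hq) Q.anodyne_σ q hq
  have sq : CommSq (𝟙 Z) i q (w₁ ≫ Q.d₁) :=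
    ⟨by rw [Category.id_comp, ← Category.assoc, hi₁, Category.assoc, Q.σ_d₁, Category.comp_id]⟩
  exact ⟨sq.lift, sq.fac_left, sq.fac_right⟩

theorem exists_section_of_strongDeformationRetract {A : E} {u : A ⟶ B} {r : B ⟶ A}
    {h : B ⟶ Q.P} (hur : u ≫ r = 𝟙 A) (hd₀ : h ≫ Q.d₀ = r ≫ u) (hd₁ : h ≫ Q.d₁ = 𝟙 B)
    (huh : u ≫ h = u ≫ Q.σ) {Z : E} {q : Z ⟶ B} (hq : T.fib q) {v : A ⟶ Z}
    (hv : v ≫ q = u) : ∃ s : B ⟶ Z, s ≫ q = 𝟙 B ∧ u ≫ s = v := by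
  obtain ⟨W, w₁, w₂, hW⟩ := T.carrable Q.d₀ hq
  set i := hW.lift (q ≫ Q.σ) (𝟙 Z) (by rw [Category.assoc, Q.σ_d₀, Category.comp_id,
    Category.id_comp])
  obtain ⟨τ, hiτ, hτq⟩ :=
    Q.exists_transport (i := i) hq hW (hW.lift_fst _ _ _) (hW.lift_snd _ _ _)
  set k := hW.lift h (r ≫ v) (by rw [hd₀, Category.assoc, hv])
  have huk : u ≫ k = v ≫ i := hW.hom_ext
    (by rw [Category.assoc, Category.assoc, hW.lift_fst, hW.lift_fst, ← Category.assoc, hv, huh])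
    (by rw [Category.assoc, Category.assoc, hW.lift_snd, hW.lift_snd, ← Category.assoc, hur,
      Category.id_comp, Category.comp_id])
  refine ⟨k ≫ τ, ?_, ?_⟩
  · rw [Category.assoc, hτq, ← Category.assoc, hW.lift_fst, hd₁]
  · rw [← Category.assoc, huk, Category.assoc, hiτ, Category.comp_id]

end PathObj

end

/-- A map `u : A ⟶ B` in a tribe is anodyne iff it is a strong
deformation retract: there are a retraction `r : B ⟶ A` with `r ∘ u = 1`, a path
object `(PB, ∂₀, ∂₁, σ)` for `B`, and a homotopy `h : B ⟶ PB` with `∂₀ ∘ h = u ∘ r`,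
`∂₁ ∘ h = 1_B` and `h ∘ u = σ ∘ u`. -/
theorem anodyne_iff_strongDeformationRetract {E : Type u} [Category.{v} E] (T : Tribe E)
    {A B : E} (u : A ⟶ B) :
    Anodyne T.toClan u ↔
      ∃ (r : B ⟶ A) (Q : PathObj T B) (h : B ⟶ Q.P),
        u ≫ r = 𝟙 A ∧ h ≫ Q.d₀ = r ≫ u ∧ h ≫ Q.d₁ = 𝟙 B ∧ u ≫ h = u ≫ Q.σ := by
  constructor
  · intro hu
    obtain ⟨r, hur⟩ := T.exists_retraction_of_anodyne hu
    obtain ⟨Q⟩ := T.nonempty_pathObj B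
    obtain ⟨h, hd₀, hd₁, huh⟩ := Q.exists_homotopy_extension_of_anodyne hu (r ≫ u) (𝟙 B) (u ≫ Q.σ)
      (by simp [Q.σ_d₀, reassoc_of% hur]) (by simp [Q.σ_d₁])
    exact ⟨r, Q, h, hur, hd₀, hd₁, huh⟩
  · rintro ⟨r, Q, h, hur, hd₀, hd₁, huh⟩
    exact T.anodyne_of_forall_exists_section fun _ q hq v hv =>
      Q.exists_section_of_strongDeformationRetract hur hd₀ hd₁ huh hq hv
end

section
/- (Straightening lemma) Let p : E → B be a fibration in a tribe, and let f : A → B and g : A → E be maps such that p∘g is homotopic to f. Then there exists a map g' : A → E homotopic to g with p∘g' = f. -/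
open CategoryTheory CategoryTheory.Limits

universe w v u v' u' v'' u''

/-!
Pull the fibration `p` back along the source map `∂₀ : PB ⟶ B`. The section `x ↦ (x, σ (p x))`
of this pullback is a base change of the anodyne map `σ`, hence anodyne, so lifting against `p`
yields a transport map `k` sending a point `x` and a path `γ` from `p x` to a point over the
endpoint of `γ`. Since anodyne maps are epimorphisms up to homotopy, `k` is homotopic to the
first projection. Precomposing `k` with `(g, H)` straightens `g`.
-/

namespace PathObj

variable {E : Type u} [Category.{v} E] {T : Tribe E} {B : E}

theorem fib_d₀ (Q : PathObj T B) : T.fib Q.d₀ :=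
  Q.pair_pr₁ ▸ T.fib_comp Q.fib_pair (T.fib_baseChange Q.isProd (T.fib_toOne B))

theorem nonempty (T : Tribe E) (B : E) : Nonempty (PathObj T B) := by
  obtain ⟨BB, pr₁, pr₂, hBB⟩ := T.carrable (T.one_isTerminal.from B) (T.fib_toOne B)
  obtain ⟨P, σ, pair, hσ, hpair, hfac⟩ :=
    T.exists_fact (hBB.lift (𝟙 B) (𝟙 B) (T.one_isTerminal.hom_ext _ _))
  exact ⟨{ P := P, σ := σ, d₀ := pair ≫ pr₁, d₁ := pair ≫ pr₂,
            σ_d₀ := by rw [← Category.assoc, hfac, hBB.lift_fst],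
            σ_d₁ := by rw [← Category.assoc, hfac, hBB.lift_snd],
            anodyne_σ := hσ, BB := BB, pr₁ := pr₁, pr₂ := pr₂, isProd := hBB, pair := pair,
            pair_pr₁ := rfl, pair_pr₂ := rfl, fib_pair := hpair }⟩

end PathObj

section

variable {E : Type u} [Category.{v} E] {T : Tribe E}

theorem Homotopic.comp_left {A A' B : E} {f g : A ⟶ B} (h : Homotopic T f g) (w : A' ⟶ A) :
    Homotopic T (w ≫ f) (w ≫ g) := by
  obtain ⟨Q, H, hH₀, hH₁⟩ := h
  exact ⟨Q, w ≫ H, by rw [Category.assoc, hH₀], by rw [Category.assoc, hH₁]⟩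

theorem homotopic_of_anodyne_comp_eq {Y Z X : E} {j : Y ⟶ Z} (hj : Anodyne T.toClan j)
    {a b : Z ⟶ X} (h : j ≫ a = j ≫ b) : Homotopic T a b := by
  obtain ⟨R⟩ := PathObj.nonempty T X
  let ab : Z ⟶ R.BB := R.isProd.lift a b (T.one_isTerminal.hom_ext _ _)
  have : HasLiftingProperty j R.pair := hj R.pair R.fib_pair
  have sq : CommSq ((j ≫ a) ≫ R.σ) j R.pair ab := ⟨by
    apply R.isProd.hom_ext
    · simp [ab, R.pair_pr₁, R.σ_d₀]
    · simp [ab, R.pair_pr₂, R.σ_d₁, h]⟩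
  refine ⟨R, sq.lift, ?_, ?_⟩
  · rw [← R.pair_pr₁, ← Category.assoc, sq.fac_right, R.isProd.lift_fst]
  · rw [← R.pair_pr₂, ← Category.assoc, sq.fac_right, R.isProd.lift_snd]

theorem anodyne_of_isPullback_of_section {X B P Z : E} {p : X ⟶ B} {σ : B ⟶ P} {d : P ⟶ B}
    (hp : T.fib p) (hσ : Anodyne T.toClan σ) (hσd : σ ≫ d = 𝟙 B)
    {z₁ : Z ⟶ X} {z₂ : Z ⟶ P} (hZ : IsPullback z₁ z₂ p d)
    {j : X ⟶ Z} (hj₁ : j ≫ z₁ = 𝟙 X) (hj₂ : j ≫ z₂ = p ≫ σ) : Anodyne T.toClan j := by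
  have hj : IsPullback j p z₂ σ := by
    refine IsPullback.of_right ?_ hj₂ hZ
    rw [hj₁, hσd]
    exact IsPullback.of_horiz_isIso ⟨by simp⟩
  exact T.anodyne_baseChange hj (T.fib_baseChange hZ.flip hp) hσ

theorem exists_transport {X B Z : E} {p : X ⟶ B} (hp : T.fib p) (Q : PathObj T B)
    {z₁ : Z ⟶ X} {z₂ : Z ⟶ Q.P} (hZ : IsPullback z₁ z₂ p Q.d₀) :
    ∃ k : Z ⟶ X, Homotopic T z₁ k ∧ k ≫ p = z₂ ≫ Q.d₁ := by
  let j : X ⟶ Z := hZ.lift (𝟙 X) (p ≫ Q.σ) (by simp [Q.σ_d₀])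
  have hj : Anodyne T.toClan j := anodyne_of_isPullback_of_section hp Q.anodyne_σ Q.σ_d₀ hZ
    (hZ.lift_fst _ _ _) (hZ.lift_snd _ _ _)
  have : HasLiftingProperty j p := hj p hp
  have sq : CommSq (𝟙 X) j p (z₂ ≫ Q.d₁) := ⟨by simp [j, Q.σ_d₁]⟩
  refine ⟨sq.lift, homotopic_of_anodyne_comp_eq hj ?_, sq.fac_right⟩
  rw [sq.fac_left, hZ.lift_fst]

end

/-- Straightening lemma: If `p : X ⟶ B` is a fibration in a tribe and
`g : A ⟶ X`, `f : A ⟶ B` are maps with `p ∘ g` homotopic to `f`, then there is a map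
`g'` homotopic to `g` with `p ∘ g' = f`. -/
theorem straightening {E : Type u} [Category.{v} E] (T : Tribe E)
    {A B X : E} (p : X ⟶ B) (hp : T.fib p) (f : A ⟶ B) (g : A ⟶ X)
    (h : Homotopic T (g ≫ p) f) :
    ∃ g' : A ⟶ X, Homotopic T g g' ∧ g' ≫ p = f := by
  obtain ⟨Q, H, hH₀, hH₁⟩ := h
  obtain ⟨Z, z₁, z₂, hZ⟩ := T.carrable p Q.fib_d₀
  obtain ⟨k, hk, hkp⟩ := exists_transport hp Q hZ
  let w : A ⟶ Z := hZ.lift g H hH₀.symm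
  refine ⟨w ≫ k, ?_, by rw [Category.assoc, hkp, hZ.lift_snd_assoc, hH₁]⟩
  simpa [w] using hk.comp_left w
end

section
/- Every tribe, with acyclic maps taken to be the homotopy equivalences, is a Brown fibration category: every isomorphism is a homotopy equivalence; homotopy equivalences satisfy the 3-for-2 property; every map factors as a homotopy equivalence followed by a fibration; and every base change of a trivial fibration (a fibration which is a homotopy equivalence) along an arbitrary map is a trivial fibration. -/
open CategoryTheory CategoryTheory.Limits

universe w v u v' u' v'' u''

/-!
Homotopies are produced by lifting, along an anodyne map, against the fibration
`P ⟶ X ×_B X` of a (relative) path object. This makes homotopy a congruence, whence 3-for-2,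
and shows that anodyne maps, which have retractions, are homotopy equivalences.

The substance is the stability of trivial fibrations under base change. By homotopy lifting a
trivial fibration `p : X ⟶ B` has a section `s`, which can be chosen so that `p ≫ s` is
fiberwise homotopic to `𝟙 X`. Since anodyne maps are stable under base change along
fibrations, such a fiberwise homotopy pulls back along any fibration `q`, and the base change
of `p` along `q` is a homotopy equivalence. A general `f` factors as an anodyne `a` followed
by a fibration `q`; the base change `p₁` of `p` along `f` then satisfies `p₁ ≫ a = ι ≫ c₁`,
where `c₁` is the base change along `q` and `ι` is anodyne as a base change of `a`, so 3-for-2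
concludes.
-/

section

variable {E : Type u} [Category.{v} E]

lemma Anodyne.exists_lift {C : Clan E} {A B X Y : E} {u : A ⟶ B} {f : X ⟶ Y}
    (hu : Anodyne C u) (hf : C.fib f) {top : A ⟶ X} {bot : B ⟶ Y}
    (w : top ≫ f = u ≫ bot) : ∃ l : B ⟶ X, u ≫ l = top ∧ l ≫ f = bot :=
  have := hu f hf
  ⟨(CommSq.mk w).lift, (CommSq.mk w).fac_left, (CommSq.mk w).fac_right⟩

lemma Anodyne.comp {C : Clan E} {A B D : E} {u : A ⟶ B} {v : B ⟶ D}
    (hu : Anodyne C u) (hv : Anodyne C v) : Anodyne C (u ≫ v) := fun _ _ f hf =>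
  have := hu f hf
  have := hv f hf
  inferInstance

variable {T : Tribe E}

/-- In the pasting of `IsPullback.of_right`, `h₁₁` is the base change of `h₂₁` along the
fibration `v₁₂`. -/
lemma Tribe.anodyne_of_isPullback_of_right {X₁₁ X₁₂ X₁₃ X₂₁ X₂₂ X₂₃ : E}
    {h₁₁ : X₁₁ ⟶ X₁₂} {h₁₂ : X₁₂ ⟶ X₁₃} {h₂₁ : X₂₁ ⟶ X₂₂} {h₂₂ : X₂₂ ⟶ X₂₃}
    {v₁₁ : X₁₁ ⟶ X₂₁} {v₁₂ : X₁₂ ⟶ X₂₂} {v₁₃ : X₁₃ ⟶ X₂₃}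
    (s : IsPullback (h₁₁ ≫ h₁₂) v₁₁ v₁₃ (h₂₁ ≫ h₂₂)) (p : h₁₁ ≫ v₁₂ = v₁₁ ≫ h₂₁)
    (t : IsPullback h₁₂ v₁₂ v₁₃ h₂₂) (hv : T.fib v₁₃) (hh : Anodyne T.toClan h₂₁) :
    Anodyne T.toClan h₁₁ :=
  T.anodyne_baseChange (s.of_right p t) (T.fib_baseChange t.flip hv) hh

/-- A path object for `X` relative to `p : X ⟶ B`: a factorization of the diagonal
`X ⟶ X ×_B X` as an anodyne map followed by a fibration. A `PathObj T B` is the same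
thing for `B ⟶ 1`. -/
structure RelPathObj (T : Tribe E) {X B : E} (p : X ⟶ B) where
  P : E
  σ : X ⟶ P
  d₀ : P ⟶ X
  d₁ : P ⟶ X
  σ_d₀ : σ ≫ d₀ = 𝟙 X
  σ_d₁ : σ ≫ d₁ = 𝟙 X
  anodyne_σ : Anodyne T.toClan σ
  XX : E
  pr₁ : XX ⟶ X
  pr₂ : XX ⟶ X
  isPullback : IsPullback pr₁ pr₂ p p
  pair : P ⟶ XX
  pair_pr₁ : pair ≫ pr₁ = d₀
  pair_pr₂ : pair ≫ pr₂ = d₁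
  fib_pair : T.fib pair

def FiberHomotopic (T : Tribe E) {A X B : E} (p : X ⟶ B) (f g : A ⟶ X) : Prop :=
  ∃ (R : RelPathObj T p) (H : A ⟶ R.P), H ≫ R.d₀ = f ∧ H ≫ R.d₁ = g

namespace RelPathObj

variable {X B : E} {p : X ⟶ B}

lemma w (R : RelPathObj T p) : R.d₀ ≫ p = R.d₁ ≫ p := by
  rw [← R.pair_pr₁, ← R.pair_pr₂, Category.assoc, Category.assoc, R.isPullback.w]

lemma fib_d₀ (R : RelPathObj T p) (hp : T.fib p) : T.fib R.d₀ :=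
  R.pair_pr₁ ▸ T.fib_comp R.fib_pair (T.fib_baseChange R.isPullback hp)

lemma fib_d₁ (R : RelPathObj T p) (hp : T.fib p) : T.fib R.d₁ :=
  R.pair_pr₂ ▸ T.fib_comp R.fib_pair (T.fib_baseChange R.isPullback.flip hp)

lemma nonempty (hp : T.fib p) : Nonempty (RelPathObj T p) := by
  obtain ⟨XX, pr₁, pr₂, hXX⟩ := T.carrable p hp
  obtain ⟨P, σ, q, hσ, hq, hσq⟩ := T.exists_fact (hXX.lift (𝟙 X) (𝟙 X) rfl)
  exact ⟨⟨P, σ, q ≫ pr₁, q ≫ pr₂, by simp [reassoc_of% hσq], by simp [reassoc_of% hσq], hσ,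
    XX, pr₁, pr₂, hXX, q, rfl, rfl, hq⟩⟩

end RelPathObj

theorem homotopic_iff_fiberHomotopic {A B : E} {f g : A ⟶ B} :
    Homotopic T f g ↔ FiberHomotopic T (T.one_isTerminal.from B) f g := by
  constructor
  · rintro ⟨Q, H, hH₀, hH₁⟩
    exact ⟨⟨Q.P, Q.σ, Q.d₀, Q.d₁, Q.σ_d₀, Q.σ_d₁, Q.anodyne_σ, Q.BB, Q.pr₁, Q.pr₂, Q.isProd,
      Q.pair, Q.pair_pr₁, Q.pair_pr₂, Q.fib_pair⟩, H, hH₀, hH₁⟩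
  · rintro ⟨R, H, hH₀, hH₁⟩
    exact ⟨⟨R.P, R.σ, R.d₀, R.d₁, R.σ_d₀, R.σ_d₁, R.anodyne_σ, R.XX, R.pr₁, R.pr₂, R.isPullback,
      R.pair, R.pair_pr₁, R.pair_pr₂, R.fib_pair⟩, H, hH₀, hH₁⟩

namespace FiberHomotopic

variable {A X B : E} {p : X ⟶ B}

lemma refl (hp : T.fib p) (f : A ⟶ X) : FiberHomotopic T p f f := by
  obtain ⟨R⟩ := RelPathObj.nonempty hp
  exact ⟨R, f ≫ R.σ, by simp [R.σ_d₀], by simp [R.σ_d₁]⟩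

lemma precomp {f g : A ⟶ X} (h : FiberHomotopic T p f g) {A' : E} (e : A' ⟶ A) :
    FiberHomotopic T p (e ≫ f) (e ≫ g) := by
  obtain ⟨R, H, hH₀, hH₁⟩ := h
  exact ⟨R, e ≫ H, by simp [hH₀], by simp [hH₁]⟩

/-- Every homotopy below comes from this lemma: lift `u ≫ f₀ ≫ σ` along the anodyne `u`
against the fibration `pair`. -/
lemma of_anodyne_comp_eq (hp : T.fib p) {A' : E} {u : A' ⟶ A} (hu : Anodyne T.toClan u)
    {f₀ f₁ : A ⟶ X} (hu_eq : u ≫ f₀ = u ≫ f₁) (hp_eq : f₀ ≫ p = f₁ ≫ p) :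
    FiberHomotopic T p f₀ f₁ := by
  obtain ⟨R⟩ := RelPathObj.nonempty hp
  obtain ⟨H, -, hH⟩ := hu.exists_lift R.fib_pair (top := u ≫ f₀ ≫ R.σ)
    (bot := R.isPullback.lift f₀ f₁ hp_eq) <| R.isPullback.hom_ext
      (by simp [R.pair_pr₁, R.σ_d₀]) (by simp [R.pair_pr₂, R.σ_d₁, hu_eq])
  refine ⟨R, H, ?_, ?_⟩
  · rw [← R.pair_pr₁, ← Category.assoc, hH, IsPullback.lift_fst]
  · rw [← R.pair_pr₂, ← Category.assoc, hH, IsPullback.lift_snd]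

lemma symm (hp : T.fib p) {f g : A ⟶ X} (h : FiberHomotopic T p f g) :
    FiberHomotopic T p g f := by
  obtain ⟨R, H, rfl, rfl⟩ := h
  exact (of_anodyne_comp_eq hp R.anodyne_σ (R.σ_d₁.trans R.σ_d₀.symm) R.w.symm).precomp H

lemma trans (hp : T.fib p) {f g k : A ⟶ X} (h₁ : FiberHomotopic T p f g)
    (h₂ : FiberHomotopic T p g k) : FiberHomotopic T p f k := by
  obtain ⟨R, H, rfl, hH₁⟩ := h₁
  obtain ⟨R', H', hH'₀, rfl⟩ := h₂
  obtain ⟨P₂, q₁, q₂, hP₂⟩ := T.carrable R.d₁ (R'.fib_d₀ hp)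
  have hi : Anodyne T.toClan (hP₂.lift (𝟙 R.P) (R.d₁ ≫ R'.σ) (by simp [R'.σ_d₀])) :=
    T.anodyne_of_isPullback_of_right (by simpa [R'.σ_d₀] using IsPullback.id_horiz R.d₁)
      (hP₂.lift_snd _ _ _) hP₂ (R.fib_d₁ hp) R'.anodyne_σ
  have hP₂_eq : (q₁ ≫ R.d₀) ≫ p = (q₂ ≫ R'.d₁) ≫ p := by
    simp only [Category.assoc, R.w, R'.w.symm, reassoc_of% hP₂.w]
  simpa using (of_anodyne_comp_eq hp (R.anodyne_σ.comp hi)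
    (by simp [R.σ_d₀, R.σ_d₁, R'.σ_d₁]) hP₂_eq).precomp
    (hP₂.lift H H' (hH₁.trans hH'₀.symm))

lemma postcomp {M : E} {w : M ⟶ X} (hp : T.fib p) {f₀ f₁ : A ⟶ M}
    (h : FiberHomotopic T (w ≫ p) f₀ f₁) : FiberHomotopic T p (f₀ ≫ w) (f₁ ≫ w) := by
  obtain ⟨R, H, rfl, rfl⟩ := h
  simpa using (of_anodyne_comp_eq hp R.anodyne_σ (f₀ := R.d₀ ≫ w) (f₁ := R.d₁ ≫ w)
    (by simp [reassoc_of% R.σ_d₀, reassoc_of% R.σ_d₁]) (by simpa using R.w)).precomp H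

end FiberHomotopic

namespace Homotopic

variable {A B C : E}

lemma refl (f : A ⟶ B) : Homotopic T f f :=
  homotopic_iff_fiberHomotopic.2 (.refl (T.fib_toOne B) f)

lemma symm {f g : A ⟶ B} (h : Homotopic T f g) : Homotopic T g f :=
  homotopic_iff_fiberHomotopic.2 ((homotopic_iff_fiberHomotopic.1 h).symm (T.fib_toOne B))

lemma trans {f g k : A ⟶ B} (h₁ : Homotopic T f g) (h₂ : Homotopic T g k) :
    Homotopic T f k :=
  homotopic_iff_fiberHomotopic.2 ((homotopic_iff_fiberHomotopic.1 h₁).trans (T.fib_toOne B)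
    (homotopic_iff_fiberHomotopic.1 h₂))

lemma precomp {f g : A ⟶ B} (h : Homotopic T f g) {A' : E} (e : A' ⟶ A) :
    Homotopic T (e ≫ f) (e ≫ g) :=
  homotopic_iff_fiberHomotopic.2 ((homotopic_iff_fiberHomotopic.1 h).precomp e)

lemma postcomp {f g : A ⟶ B} (h : Homotopic T f g) (k : B ⟶ C) :
    Homotopic T (f ≫ k) (g ≫ k) := by
  have h' := homotopic_iff_fiberHomotopic.1 h
  rw [← T.one_isTerminal.comp_from k] at h'
  exact homotopic_iff_fiberHomotopic.2 (h'.postcomp (T.fib_toOne C))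

lemma of_anodyne_comp_eq {A' : E} {u : A' ⟶ A} (hu : Anodyne T.toClan u) {f₀ f₁ : A ⟶ B}
    (h : u ≫ f₀ = u ≫ f₁) : Homotopic T f₀ f₁ :=
  homotopic_iff_fiberHomotopic.2
    (.of_anodyne_comp_eq (T.fib_toOne B) hu h (T.one_isTerminal.hom_ext _ _))

/-- Homotopy lifting: the section `(p ≫ σ, 𝟙)` of `Q.P ×_B X ⟶ X` is anodyne, being a base
change of `σ`, so the fibration `p` has a lift against it. -/
lemma exists_lift_of_fib {X : E} {p : X ⟶ B} (hp : T.fib p) {g : A ⟶ X} {f : A ⟶ B}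
    (h : Homotopic T (g ≫ p) f) : ∃ g' : A ⟶ X, g' ≫ p = f := by
  obtain ⟨Q, H, hH₀, hH₁⟩ := h
  obtain ⟨Y, e₁, e₂, hY⟩ := T.carrable Q.d₀ hp
  have hj : Anodyne T.toClan (hY.lift (p ≫ Q.σ) (𝟙 X) (by simp [Q.σ_d₀])) :=
    T.anodyne_of_isPullback_of_right (by simpa [Q.σ_d₀] using IsPullback.id_horiz p)
      (hY.lift_fst _ _ _) hY.flip hp Q.anodyne_σ
  obtain ⟨r, -, hr⟩ := hj.exists_lift hp (top := 𝟙 X) (bot := e₁ ≫ Q.d₁)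
    (by simp [Q.σ_d₁])
  exact ⟨hY.lift H g hH₀ ≫ r, by simp [hr, hH₁]⟩

end Homotopic

/-- A relative path object for `p`, pulled back along the fibration `q`, still has an anodyne
`σ`, and so carries homotopies in `XF`. -/
lemma FiberHomotopic.homotopic_of_isPullback {F X B XF Y Y' : E} {q : F ⟶ B} {p : X ⟶ B}
    {c₁ : XF ⟶ F} {c₂ : XF ⟶ X} (hXF : IsPullback c₁ c₂ q p) (hq : T.fib q) (hp : T.fib p)
    {f₀ f₁ : Y ⟶ X} (h : FiberHomotopic T p f₀ f₁) {e : Y' ⟶ Y} {g₀ g₁ : Y' ⟶ XF}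
    (hg : g₀ ≫ c₁ = g₁ ≫ c₁) (hg₀ : g₀ ≫ c₂ = e ≫ f₀) (hg₁ : g₁ ≫ c₂ = e ≫ f₁) :
    Homotopic T g₀ g₁ := by
  obtain ⟨R, H, hH₀, hH₁⟩ := h
  obtain ⟨RF, r₁, r₂, hRF⟩ := T.carrable q (T.fib_comp (R.fib_d₀ hp) hp)
  have hσ : Anodyne T.toClan (hRF.lift c₁ (c₂ ≫ R.σ) (by simp [hXF.w, reassoc_of% R.σ_d₀])) :=
    T.anodyne_of_isPullback_of_right (by simpa [reassoc_of% R.σ_d₀] using hXF)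
      (hRF.lift_snd _ _ _) hRF hq R.anodyne_σ
  have hd : Homotopic T (hXF.lift r₁ (r₂ ≫ R.d₀) (by simp [hRF.w]))
      (hXF.lift r₁ (r₂ ≫ R.d₁) (by simp [hRF.w, R.w])) :=
    .of_anodyne_comp_eq hσ (hXF.hom_ext (by simp) (by simp [R.σ_d₀, R.σ_d₁]))
  convert hd.precomp (hRF.lift (g₀ ≫ c₁) (e ≫ H)
    (by simp [hXF.w, reassoc_of% hg₀, reassoc_of% hH₀])) using 1 <;>
    exact hXF.hom_ext (by simp [hg]) (by simp [hg₀, hg₁, hH₀, hH₁])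

lemma Anodyne.isHomotopyEquiv {A B : E} {u : A ⟶ B} (hu : Anodyne T.toClan u) :
    IsHomotopyEquiv T u := by
  obtain ⟨r, hr, -⟩ := hu.exists_lift (T.fib_toOne A) (top := 𝟙 A)
    (bot := T.one_isTerminal.from B) (T.one_isTerminal.hom_ext _ _)
  exact ⟨r, hr ▸ .refl _, .of_anodyne_comp_eq hu (by simp [reassoc_of% hr])⟩

namespace IsHomotopyEquiv

variable {X Y Z B : E} {p : X ⟶ B}

lemma of_isIso (f : X ⟶ Y) [IsIso f] : IsHomotopyEquiv T f :=
  ⟨inv f, by simpa using Homotopic.refl (𝟙 X), by simpa using Homotopic.refl (𝟙 Y)⟩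

lemma comp {u : X ⟶ Y} {v : Y ⟶ Z} (hu : IsHomotopyEquiv T u) (hv : IsHomotopyEquiv T v) :
    IsHomotopyEquiv T (u ≫ v) := by
  obtain ⟨u', hu₁, hu₂⟩ := hu
  obtain ⟨v', hv₁, hv₂⟩ := hv
  refine ⟨v' ≫ u', ?_, ?_⟩
  · have h : Homotopic T (u ≫ (v ≫ v') ≫ u') (u ≫ u') := by
      simpa using (hv₁.postcomp u').precomp u
    simpa using h.trans hu₁
  · have h : Homotopic T (v' ≫ (u' ≫ u) ≫ v) (v' ≫ v) := by
      simpa using (hu₂.postcomp v).precomp v'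
    simpa using h.trans hv₂

lemma of_precomp {u : X ⟶ Y} {v : Y ⟶ Z} (hu : IsHomotopyEquiv T u)
    (huv : IsHomotopyEquiv T (u ≫ v)) : IsHomotopyEquiv T v := by
  obtain ⟨u', -, hu₂⟩ := hu
  obtain ⟨w, hw₁, hw₂⟩ := huv
  refine ⟨w ≫ u, ?_, by simpa using hw₂⟩
  have h₁ : Homotopic T (v ≫ w ≫ u) (u' ≫ u ≫ v ≫ w ≫ u) := by
    simpa using hu₂.symm.postcomp (v ≫ w ≫ u)
  have h₂ : Homotopic T (u' ≫ u ≫ v ≫ w ≫ u) (u' ≫ u) := by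
    simpa using (hw₁.postcomp u).precomp u'
  exact h₁.trans (h₂.trans hu₂)

lemma of_postcomp {u : X ⟶ Y} {v : Y ⟶ Z} (huv : IsHomotopyEquiv T (u ≫ v))
    (hv : IsHomotopyEquiv T v) : IsHomotopyEquiv T u := by
  obtain ⟨v', hv₁, -⟩ := hv
  obtain ⟨w, hw₁, hw₂⟩ := huv
  refine ⟨v ≫ w, by simpa using hw₁, ?_⟩
  have h₁ : Homotopic T (v ≫ w ≫ u) (v ≫ w ≫ u ≫ v ≫ v') := by
    simpa using (hv₁.symm.precomp (v ≫ w ≫ u))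
  have h₂ : Homotopic T (v ≫ w ≫ u ≫ v ≫ v') (v ≫ v') := by
    simpa using (hw₂.postcomp v').precomp v
  simpa using h₁.trans (h₂.trans hv₁)

lemma exists_section (he : IsHomotopyEquiv T p) (hp : T.fib p) : ∃ s : B ⟶ X, s ≫ p = 𝟙 B :=
  have ⟨_, _, h⟩ := he
  h.exists_lift_of_fib hp

lemma exists_section_fiberHomotopic (he : IsHomotopyEquiv T p) (hp : T.fib p) :
    ∃ s : B ⟶ X, s ≫ p = 𝟙 B ∧ FiberHomotopic T p (p ≫ s) (𝟙 X) := by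
  obtain ⟨s, hs⟩ := he.exists_section hp
  -- Factor `s` as `v ≫ w`: the anodyne section `v` of `w ≫ p` is a fiberwise retract for free.
  obtain ⟨M, v, w, hv, hw, rfl⟩ := T.exists_fact s
  have hvp : v ≫ w ≫ p = 𝟙 B := by simpa using hs
  have hwe : IsHomotopyEquiv T w :=
    .of_precomp hv.isHomotopyEquiv (.of_postcomp (by simpa [hs] using .of_isIso (𝟙 B)) he)
  obtain ⟨t, ht⟩ := hwe.exists_section hw
  have hM : FiberHomotopic T (w ≫ p) ((w ≫ p) ≫ v) (𝟙 M) :=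
    .of_anodyne_comp_eq (T.fib_comp hw hp) hv (by simp [reassoc_of% hvp]) (by simp [hvp])
  exact ⟨v ≫ w, hs, by simpa [reassoc_of% ht, ht] using (hM.postcomp hp).precomp t⟩

lemma baseChange_of_fib {F XF : E} {q : F ⟶ B} {c₁ : XF ⟶ F} {c₂ : XF ⟶ X}
    (hXF : IsPullback c₁ c₂ q p) (hq : T.fib q) (hp : T.fib p) (he : IsHomotopyEquiv T p) :
    IsHomotopyEquiv T c₁ := by
  obtain ⟨s, hs, hps⟩ := he.exists_section_fiberHomotopic hp
  refine ⟨hXF.lift (𝟙 F) (q ≫ s) (by simp [hs]), ?_, by simpa using Homotopic.refl (𝟙 F)⟩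
  exact hps.homotopic_of_isPullback hXF hq hp (e := c₂) (by simp)
    (by simp [reassoc_of% hXF.w]) (by simp)

lemma baseChange {P A : E} {p₁ : P ⟶ A} {p₂ : P ⟶ X} {f : A ⟶ B}
    (h : IsPullback p₁ p₂ f p) (hp : T.fib p) (he : IsHomotopyEquiv T p) :
    IsHomotopyEquiv T p₁ := by
  obtain ⟨F, a, q, ha, hq, rfl⟩ := T.exists_fact f
  obtain ⟨XF, c₁, c₂, hXF⟩ := T.carrable q hp
  have hι : Anodyne T.toClan (hXF.lift (p₁ ≫ a) p₂ (by simp [h.w])) :=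
    T.anodyne_of_isPullback_of_right (by simpa using h.flip) (hXF.lift_fst _ _ _) hXF.flip hp ha
  have hp₁a : IsHomotopyEquiv T (p₁ ≫ a) := by
    simpa using hι.isHomotopyEquiv.comp (he.baseChange_of_fib hXF hq hp)
  exact hp₁a.of_postcomp ha.isHomotopyEquiv

end IsHomotopyEquiv

end

/-- Every tribe, with acyclic maps the homotopy equivalences, is a
Brown fibration category: isomorphisms are homotopy equivalences; homotopy
equivalences satisfy 3-for-2; every map factors as a homotopy equivalence followed
by a fibration; and every base change of a trivial fibration along an arbitrary map
is a trivial fibration. -/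
theorem tribe_is_brown_fibration_category {E : Type u} [Category.{v} E] (T : Tribe E) :
    (∀ {X Y : E} (f : X ⟶ Y), IsIso f → IsHomotopyEquiv T f) ∧
    (∀ {X Y Z : E} (u : X ⟶ Y) (v : Y ⟶ Z),
      (IsHomotopyEquiv T u → IsHomotopyEquiv T v → IsHomotopyEquiv T (u ≫ v)) ∧
      (IsHomotopyEquiv T u → IsHomotopyEquiv T (u ≫ v) → IsHomotopyEquiv T v) ∧
      (IsHomotopyEquiv T v → IsHomotopyEquiv T (u ≫ v) → IsHomotopyEquiv T u)) ∧
    (∀ {X Y : E} (f : X ⟶ Y), ∃ (Z : E) (w : X ⟶ Z) (p : Z ⟶ Y),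
      IsHomotopyEquiv T w ∧ T.fib p ∧ w ≫ p = f) ∧
    (∀ {P A X B : E} {p₁ : P ⟶ A} {p₂ : P ⟶ X} {f : A ⟶ B} {p : X ⟶ B},
      IsPullback p₁ p₂ f p → T.fib p → IsHomotopyEquiv T p →
        T.fib p₁ ∧ IsHomotopyEquiv T p₁) := by
  refine ⟨fun f _ => .of_isIso f,
    fun _ _ => ⟨.comp, .of_precomp, fun hv huv => huv.of_postcomp hv⟩, fun f => ?_,
    fun h hp he => ⟨T.fib_baseChange h hp, he.baseChange h hp⟩⟩
  obtain ⟨Z, u, p, hu, hp, rfl⟩ := T.exists_fact f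
  exact ⟨Z, u, p, hu.isHomotopyEquiv, hp, rfl⟩
end
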